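/- Let O be the ring of integers in a finite extension of Q_p with prime 𝔭 above p, let a be a positive integer, and let L = ⊕_{i=0}^k (O/𝔭^a)·X^{k-i}Y^i. Define T on L by T(P) = Σ_{u=0}^{p-1} P(X + uY, pY). Then T is nilpotent; in fact T^{a(k+1)} = 0 on L. -/

import Mathlib

/-!
Filter `L` by divisibility by `Y`: `L_j` is spanned by the `X^(k-s) Y^s` with `s ≥ j`.
The substitution `P ↦ P(X + uY, pY)` sends `X^(k-s) Y^s` to `p^s X^(k-s) Y^s` modulo `L_(s+1)`,
so `T` maps `L_j` into `p L_j + L_(j+1)`. As `p^a = 0`, `T^a` maps `L_j` into `L_(j+1)`, and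
`T^(a(k+1))` maps `L = L_0` into `L_(k+1) = 0`.
-/

open MvPolynomial

/-- The operator `T(P) = ∑_{u=0}^{p-1} P(X + u Y, p Y)` on polynomials over `Z/(p^a)`. -/
noncomputable def Uoperator (p a : ℕ) :
    Module.End (ZMod (p ^ a)) (MvPolynomial (Fin 2) (ZMod (p ^ a))) :=
  ∑ u ∈ Finset.range p,
    (aeval ![X 0 + (u : ZMod (p ^ a)) • X 1, (p : ZMod (p ^ a)) • X 1] :
      MvPolynomial (Fin 2) (ZMod (p ^ a)) →ₐ[ZMod (p ^ a)]
        MvPolynomial (Fin 2) (ZMod (p ^ a))).toLinearMap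

section Filtration

variable {R M : Type*} [CommSemiring R] [AddCommMonoid M] [Module R M]
  {f : Module.End R M} {I : Ideal R} {N : ℕ → Submodule R M}

theorem Submodule.map_pow_le_pow_smul_sup (hN : Antitone N)
    (hf : ∀ j, (N j).map f ≤ I • N j ⊔ N (j + 1)) (j m : ℕ) :
    (N j).map (f ^ m) ≤ I ^ m • N j ⊔ N (j + 1) := by
  induction m with
  | zero => simp [Module.End.one_eq_id]
  | succ m ih =>
    have hstable : (N (j + 1)).map f ≤ N (j + 1) :=
      (hf (j + 1)).trans (sup_le Submodule.smul_le_right (hN (Nat.le_succ _)))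
    calc (N j).map (f ^ (m + 1)) = ((N j).map (f ^ m)).map f := by
          rw [pow_succ', Module.End.mul_eq_comp, Submodule.map_comp]
      _ ≤ (I ^ m • N j ⊔ N (j + 1)).map f := Submodule.map_mono ih
      _ = I ^ m • (N j).map f ⊔ (N (j + 1)).map f := by
          rw [Submodule.map_sup, Submodule.map_smul'']
      _ ≤ I ^ m • (I • N j ⊔ N (j + 1)) ⊔ N (j + 1) :=
          sup_le_sup (smul_mono_right _ (hf j)) hstable
      _ ≤ I ^ (m + 1) • N j ⊔ N (j + 1) := by
          rw [Submodule.smul_sup, pow_succ, Submodule.mul_smul]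
          exact sup_le (sup_le_sup_left Submodule.smul_le_right _) le_sup_right

theorem Submodule.map_pow_mul_le_of_pow_eq_bot {a : ℕ} (hI : I ^ a = ⊥) (hN : Antitone N)
    (hf : ∀ j, (N j).map f ≤ I • N j ⊔ N (j + 1)) (m : ℕ) :
    (N 0).map (f ^ (a * m)) ≤ N m := by
  induction m with
  | zero => simp [Module.End.one_eq_id]
  | succ m ih =>
    calc (N 0).map (f ^ (a * (m + 1))) = ((N 0).map (f ^ (a * m))).map (f ^ a) := by
          rw [mul_add, mul_one, add_comm, pow_add, Module.End.mul_eq_comp, Submodule.map_comp]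
      _ ≤ (N m).map (f ^ a) := Submodule.map_mono ih
      _ ≤ N (m + 1) := by
          simpa [hI] using Submodule.map_pow_le_pow_smul_sup hN hf m a

end Filtration

/-- `X 0` and `X 1` play the roles of `X` and `Y`. -/
noncomputable def yFiltration (R : Type*) [CommSemiring R] (k j : ℕ) :
    Submodule R (MvPolynomial (Fin 2) R) :=
  Submodule.span R {Q | ∃ t s, t + s = k ∧ j ≤ s ∧ Q = X 0 ^ t * X 1 ^ s}

section yFiltration

variable {R : Type*}

theorem X_pow_mul_X_pow_mem_yFiltration [CommSemiring R] {k j t s : ℕ} (hk : t + s = k)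
    (hj : j ≤ s) :
    (X 0 ^ t * X 1 ^ s : MvPolynomial (Fin 2) R) ∈ yFiltration R k j :=
  Submodule.subset_span ⟨t, s, hk, hj, rfl⟩

theorem yFiltration_antitone [CommSemiring R] (k : ℕ) : Antitone (yFiltration R k) :=
  fun _ _ hij =>
    Submodule.span_mono fun _ ⟨t, s, hk, hj, hQ⟩ => ⟨t, s, hk, hij.trans hj, hQ⟩

theorem yFiltration_succ_eq_bot [CommSemiring R] (k : ℕ) : yFiltration R k (k + 1) = ⊥ := by
  rw [yFiltration, Submodule.span_eq_bot]
  rintro _ ⟨t, s, hk, hj, -⟩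
  omega

theorem aeval_X_pow_mul_X_pow [CommRing R] (u c : R) (t s : ℕ) :
    aeval (R := R) (S₁ := MvPolynomial (Fin 2) R) ![X 0 + u • X 1, c • X 1]
      (X 0 ^ t * X 1 ^ s)
      = c ^ s • (X 0 ^ t * X 1 ^ s) + ∑ m ∈ Finset.range t,
        (u ^ (t - m) * t.choose m * c ^ s) • (X 0 ^ m * X 1 ^ (t - m + s)) := by
  simp only [map_mul, map_pow, aeval_X, Matrix.cons_val_zero, Matrix.cons_val_one]
  rw [add_pow, Finset.sum_range_succ, add_mul, Finset.sum_mul, add_comm]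
  simp only [smul_eq_C_mul, map_mul, map_pow, map_natCast]
  rw [Nat.sub_self, Nat.choose_self, Nat.cast_one]
  refine congrArg₂ (· + ·) ?_ (Finset.sum_congr rfl fun m _ => ?_) <;> ring

theorem aeval_X_pow_mul_X_pow_sub_mem_yFiltration [CommRing R] (u c : R) (t s : ℕ) :
    aeval (R := R) (S₁ := MvPolynomial (Fin 2) R) ![X 0 + u • X 1, c • X 1]
      (X 0 ^ t * X 1 ^ s)
      - c ^ s • (X 0 ^ t * X 1 ^ s) ∈ yFiltration R (t + s) (s + 1) := by
  rw [aeval_X_pow_mul_X_pow, add_sub_cancel_left]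
  refine Submodule.sum_mem _ fun m hm => Submodule.smul_mem _ _ ?_
  have hm : m < t := Finset.mem_range.mp hm
  exact X_pow_mul_X_pow_mem_yFiltration (by omega) (by omega)

end yFiltration

theorem Uoperator_map_yFiltration_le (p a k j : ℕ) :
    (yFiltration (ZMod (p ^ a)) k j).map (Uoperator p a) ≤
      Ideal.span {(p : ZMod (p ^ a))} • yFiltration (ZMod (p ^ a)) k j ⊔
        yFiltration (ZMod (p ^ a)) k (j + 1) := by
  refine (Submodule.map_span _ _).trans_le (Submodule.span_le.mpr ?_)
  rintro _ ⟨_, ⟨t, s, rfl, hjs, rfl⟩, rfl⟩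
  set c : ZMod (p ^ a) := (p : ZMod (p ^ a))
  set Q : MvPolynomial (Fin 2) (ZMod (p ^ a)) := X 0 ^ t * X 1 ^ s
  have hlead : ∑ _u ∈ Finset.range p, c ^ s • Q = c • c ^ s • Q := by
    rw [Finset.sum_const, Finset.card_range, Nat.cast_smul_eq_nsmul]
  have htail :
      Uoperator p a Q - c • c ^ s • Q ∈ yFiltration (ZMod (p ^ a)) (t + s) (s + 1) := by
    rw [← hlead, Uoperator, LinearMap.sum_apply, ← Finset.sum_sub_distrib]
    exact Submodule.sum_mem _ fun u _ => aeval_X_pow_mul_X_pow_sub_mem_yFiltration _ _ t s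
  have hsplit := Submodule.add_mem_sup
    (Submodule.smul_mem_smul (Ideal.mem_span_singleton_self c)
      (Submodule.smul_mem _ (c ^ s) (X_pow_mul_X_pow_mem_yFiltration (t := t) rfl hjs)))
    (yFiltration_antitone _ (Nat.succ_le_succ hjs) htail)
  rwa [add_sub_cancel] at hsplit

theorem stmt_8_general (p : ℕ) (a : ℕ) (k : ℕ)
    (P : MvPolynomial (Fin 2) (ZMod (p ^ a)))
    (hP : P ∈ Submodule.span (ZMod (p ^ a))
        {Q : MvPolynomial (Fin 2) (ZMod (p ^ a)) | ∃ i ≤ k, Q = X 0 ^ (k - i) * X 1 ^ i}) :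
    (Uoperator p a ^ (a * (k + 1))) P = 0 := by
  have hP₀ : P ∈ yFiltration (ZMod (p ^ a)) k 0 :=
    Submodule.span_le.mpr (by
      rintro _ ⟨i, hik, rfl⟩
      exact X_pow_mul_X_pow_mem_yFiltration (Nat.sub_add_cancel hik) (Nat.zero_le i)) hP
  have hp_pow : Ideal.span {(p : ZMod (p ^ a))} ^ a = ⊥ := by
    rw [Ideal.span_singleton_pow, ← Nat.cast_pow, ZMod.natCast_self, Ideal.span_singleton_eq_bot]
  have h := Submodule.map_pow_mul_le_of_pow_eq_bot hp_pow (yFiltration_antitone k)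
    (Uoperator_map_yFiltration_le p a k) (k + 1) (Submodule.mem_map_of_mem hP₀)
  rwa [yFiltration_succ_eq_bot, Submodule.mem_bot] at h

/-- Let `O` be the ring of integers in a finite extension of `ℚ_p`, `a` a positive
integer, and `L = ⊕_{i=0}^k (O/𝔭^a) X^(k-i) Y^i` (modelled here over `Z/(p^a)`, which
suffices since `p^a = 0` there).  The operator `T(P) = ∑_{u=0}^{p-1} P(X + uY, pY)` is
nilpotent on `L`; in fact `T^(a(k+1)) = 0` on `L`. -/
theorem stmt_8 (p : ℕ) (hp : p.Prime) (a : ℕ) (ha : 0 < a) (k : ℕ)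
    (P : MvPolynomial (Fin 2) (ZMod (p ^ a)))
    (hP : P ∈ Submodule.span (ZMod (p ^ a))
        {Q : MvPolynomial (Fin 2) (ZMod (p ^ a)) | ∃ i ≤ k, Q = X 0 ^ (k - i) * X 1 ^ i}) :
    (Uoperator p a ^ (a * (k + 1))) P = 0 :=
  stmt_8_general p a k P hP
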